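/- For every simple symmetric fractional hedonic game represented by a finite simple graph with girth at least five, the core is non-empty; moreover, there exists a partition in the core each of whose blocks is either a singleton or a star (a block S with |S| ≥ 2 containing a vertex c adjacent to every other vertex of S). -/

import Mathlib

open Finset
open scoped Classical

variable {V : Type*} [Fintype V] [DecidableEq V]

/-- The utility of player `i` in coalition `S` in the simple symmetric fractional
hedonic game given by the graph `G`: the number of neighbors of `i` in `S`
divided by the size of `S`. -/
noncomputable def util (G : SimpleGraph V) (i : V) (S : Finset V) : ℚ :=
  ((S.filter fun j => G.Adj i j).card : ℚ) / (S.card : ℚ)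

/-- A partition of the player set `V`, given by the block `part i` of each player `i`. -/
structure FHGPartition (V : Type*) [Fintype V] [DecidableEq V] where
  part : V → Finset V
  mem_part : ∀ i, i ∈ part i
  part_eq : ∀ i j, j ∈ part i → part j = part i

/-- A nonempty coalition `S` blocks `π` if every member is strictly better off in `S`. -/
def Blocks (G : SimpleGraph V) (π : FHGPartition V) (S : Finset V) : Prop :=
  S.Nonempty ∧ ∀ i ∈ S, util G i (π.part i) < util G i S

/-- A partition is in the core if no nonempty coalition blocks it. -/
def InCore (G : SimpleGraph V) (π : FHGPartition V) : Prop :=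
  ∀ S : Finset V, ¬ Blocks G π S

/-- A nonempty coalition `S` weakly blocks `π` if every member is weakly better off
in `S` and some member is strictly better off. -/
def WeaklyBlocks (G : SimpleGraph V) (π : FHGPartition V) (S : Finset V) : Prop :=
  S.Nonempty ∧ (∀ i ∈ S, util G i (π.part i) ≤ util G i S) ∧
    ∃ j ∈ S, util G j (π.part j) < util G j S

/-- A partition is in the strict core if no nonempty coalition weakly blocks it. -/
def InStrictCore (G : SimpleGraph V) (π : FHGPartition V) : Prop :=
  ∀ S : Finset V, ¬ WeaklyBlocks G π S

/-!
Among the partitions into stars (singletons included) choose one, `π`, maximising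
`∑ i, 2 (|π(i)| - 1) / |π(i)| ^ 2`, which for a triangle-free graph is the social welfare of `π`.
A player of `π` with utility below `1/2` is a singleton or a leaf of a star with at least three
vertices; every other player is the centre of a star with at least two vertices. By optimality,
no two players of the first kind are adjacent (isolating one and pairing them gains `1` and loses
at most `2/3`), and such a player `x` adjacent to a centre `v` in another block satisfies
`|π(x)| ≤ |π(v)| + 1` (moving `x` into `π(v)` must not pay).

In a blocking coalition `S` every member has a neighbour in `S`, and two centres would each be
adjacent to more than half of `S`, which needs a triangle or a 4-cycle. Hence `S` is a star
around a single centre `v` of `π` whose leaves are of the first kind, and comparing utilities in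
`S` and in `π` gives `|π(v)| < |S| < |π(x)| ≤ |π(v)| + 1` for a leaf `x` of `S`.
-/

open SimpleGraph

section Girth

variable {α : Type*} {G : SimpleGraph α}

theorem SimpleGraph.cliqueFree_three_of_isCycle_length_ne_three
    (hG : ∀ (u : α) (w : G.Walk u u), w.IsCycle → w.length ≠ 3) : G.CliqueFree 3 := by
  intro s hs
  obtain ⟨u, w, hw, hlen⟩ := is3Clique_iff_exists_cycle_length_three.mp ⟨s, hs⟩
  exact hG u w hw hlen

theorem SimpleGraph.commonNeighbors_subsingleton_of_isCycle_length_ne_four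
    (hG : ∀ (u : α) (w : G.Walk u u), w.IsCycle → w.length ≠ 4) {v w : α} (hvw : v ≠ w) :
    (G.commonNeighbors v w).Subsingleton := by
  intro a ha b hb
  rw [mem_commonNeighbors] at ha hb
  by_contra hab
  have hva := ha.1.ne
  have hvb := hb.1.ne
  have hwa := ha.2.ne
  have hwb := hb.2.ne
  let c : G.Walk v v := .cons ha.1 (.cons ha.2.symm (.cons hb.2 (.cons hb.1.symm .nil)))
  have hc : c.IsCycle :=
    { edges_nodup := by aesop
      ne_nil := by aesop
      support_nodup := by aesop }
  exact hG v c hc rfl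

end Girth

section Utility

variable {α : Type*} {G : SimpleGraph α} {S : Finset α} {c i v w : α}

def IsStarCenter (G : SimpleGraph α) (S : Finset α) (c : α) : Prop :=
  c ∈ S ∧ ∀ j ∈ S, j ≠ c → G.Adj c j

theorem util_nonneg : 0 ≤ util G i S := by
  unfold util
  positivity

theorem exists_adj_of_util_pos (h : 0 < util G i S) : ∃ j ∈ S, G.Adj i j := by
  by_contra! hno
  rw [util, filter_false_of_mem hno, card_empty, Nat.cast_zero, zero_div] at h
  exact h.false

theorem IsStarCenter.erase [DecidableEq α] (h : IsStarCenter G S c) (hvc : v ≠ c) :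
    IsStarCenter G (S.erase v) c :=
  ⟨mem_erase.mpr ⟨hvc.symm, h.1⟩, fun j hj hjc => h.2 j (mem_of_mem_erase hj) hjc⟩

theorem IsStarCenter.util_self (h : IsStarCenter G S c) : util G c S = 1 - 1 / #S := by
  classical
  have hfilter : S.filter (fun j => G.Adj c j) = S.erase c := by
    ext j
    simp only [mem_filter, mem_erase]
    exact ⟨fun ⟨hj, hcj⟩ => ⟨hcj.ne', hj⟩, fun ⟨hjc, hj⟩ => ⟨hj, h.2 j hj hjc⟩⟩
  have hS : (#S : ℚ) ≠ 0 := by exact_mod_cast (card_pos.mpr ⟨c, h.1⟩).ne'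
  rw [util, hfilter, card_erase_of_mem h.1, Nat.cast_pred (card_pos.mpr ⟨c, h.1⟩)]
  field_simp

theorem IsStarCenter.util_of_ne (h3 : G.CliqueFree 3) (h : IsStarCenter G S c) (hv : v ∈ S)
    (hvc : v ≠ c) : util G v S = 1 / #S := by
  have hcv := h.2 v hv hvc
  have hfilter : S.filter (fun j => G.Adj v j) = {c} := by
    ext j
    simp only [mem_filter, mem_singleton]
    refine ⟨fun ⟨hj, hvj⟩ => ?_, fun hjc => hjc ▸ ⟨h.1, hcv.symm⟩⟩
    by_contra hjc
    exact isIndepSet_neighborSet_of_triangleFree G h3 c hcv (h.2 j hj hjc) hvj.ne hvj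
  rw [util, hfilter, card_singleton, Nat.cast_one]

theorem IsStarCenter.half_le_util_self (h : IsStarCenter G S c) (hS : 2 ≤ #S) :
    1 / 2 ≤ util G c S := by
  have hS' : (2 : ℚ) ≤ #S := by exact_mod_cast hS
  have := one_div_le_one_div_of_le two_pos hS'
  rw [h.util_self]
  linarith

theorem IsStarCenter.one_div_card_le_util (h : IsStarCenter G S c) (hv : v ∈ S) (hS : 2 ≤ #S) :
    1 / #S ≤ util G v S := by
  obtain ⟨j, hj, hvj⟩ : ∃ j ∈ S, G.Adj v j := by
    by_cases hvc : v = c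
    · obtain ⟨j, hj, hjc⟩ := exists_mem_ne hS c
      exact ⟨j, hj, hvc ▸ h.2 j hj hjc⟩
    · exact ⟨c, h.1, (h.2 v hv hvc).symm⟩
  unfold util
  gcongr
  exact_mod_cast card_pos.mpr ⟨j, mem_filter.mpr ⟨hj, hvj⟩⟩

theorem card_filter_adj_add_card_filter_adj_le (h3 : G.CliqueFree 3)
    (h4 : ∀ v w, v ≠ w → (G.commonNeighbors v w).Subsingleton) (hv : v ∈ S) (hvw : v ≠ w) :
    #(S.filter fun j => G.Adj v j) + #(S.filter fun j => G.Adj w j) ≤ #S := by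
  classical
  set Nv := S.filter fun j => G.Adj v j
  set Nw := S.filter fun j => G.Adj w j
  rw [← card_union_add_card_inter]
  by_cases hadj : G.Adj v w
  · have hdisj : Nv ∩ Nw = ∅ := by
      refine eq_empty_of_forall_notMem fun j hj => ?_
      simp only [Nv, Nw, mem_inter, mem_filter] at hj
      exact isIndepSet_neighborSet_of_triangleFree G h3 j hj.1.2.symm hj.2.2.symm hvw hadj
    rw [hdisj, card_empty, add_zero]
    exact card_le_card (union_subset (filter_subset _ _) (filter_subset _ _))
  · have hunion : Nv ∪ Nw ⊆ S.erase v := by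
      intro j hj
      simp only [Nv, Nw, mem_union, mem_filter] at hj
      refine mem_erase.mpr ⟨?_, hj.elim And.left And.left⟩
      rintro rfl
      exact hj.elim (fun h => h.2.ne rfl) (fun h => hadj h.2.symm)
    have hinter : #(Nv ∩ Nw) ≤ 1 := by
      refine card_le_one.mpr fun a ha b hb => h4 v w hvw ?_ ?_ <;>
        simp_all [Nv, Nw, mem_commonNeighbors]
    have := card_le_card hunion
    rw [card_erase_of_mem hv] at this
    have := card_pos.mpr ⟨v, hv⟩
    omega

theorem util_add_util_le_one (h3 : G.CliqueFree 3)
    (h4 : ∀ v w, v ≠ w → (G.commonNeighbors v w).Subsingleton) (hv : v ∈ S) (hvw : v ≠ w) :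
    util G v S + util G w S ≤ 1 := by
  have hS : (0 : ℚ) < #S := by exact_mod_cast card_pos.mpr ⟨v, hv⟩
  rw [util, util, ← add_div, div_le_one hS]
  exact_mod_cast card_filter_adj_add_card_filter_adj_le h3 h4 hv hvw

theorem IsStarCenter.card_eq_one_or (h : IsStarCenter G S c) :
    #S = 1 ∨ (2 ≤ #S ∧ ∃ c ∈ S, ∀ j ∈ S, j ≠ c → G.Adj c j) := by
  rcases Nat.lt_or_ge #S 2 with hS | hS
  · exact Or.inl (by have := card_pos.mpr ⟨c, h.1⟩; omega)
  · exact Or.inr ⟨hS, c, h⟩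

end Utility

namespace FHGPartition

variable {P : FHGPartition V} {A B : Finset V} {i j x : V}

theorem card_part_pos (P : FHGPartition V) (i : V) : 0 < #(P.part i) :=
  card_pos.mpr ⟨i, P.mem_part i⟩

theorem mem_part_comm : i ∈ P.part j ↔ j ∈ P.part i :=
  ⟨fun h => P.part_eq j i h ▸ P.mem_part j, fun h => P.part_eq i j h ▸ P.mem_part i⟩

def reblock (P : FHGPartition V) (B : Finset V) : FHGPartition V where
  part i := if i ∈ B then B else P.part i \ B
  mem_part i := by
    split_ifs with h
    · exact h
    · exact mem_sdiff.mpr ⟨P.mem_part i, h⟩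
  part_eq i j hj := by
    by_cases hi : i ∈ B
    · simp only [if_pos hi] at hj
      simp [hj, hi]
    · simp only [if_neg hi, mem_sdiff] at hj
      simp only [if_neg hj.2, if_neg hi]
      rw [P.part_eq i j hj.1]

theorem reblock_part_of_mem (h : i ∈ B) : (P.reblock B).part i = B := if_pos h

theorem reblock_part_of_notMem (h : i ∉ B) : (P.reblock B).part i = P.part i \ B := if_neg h

-- `hA` says that `A` is a block of `P` or empty; `insert x A` is then `x` moved into that block.
theorem part_sdiff_insert_of_mem (hA : ∀ j ∈ A, P.part j = A) (hxA : x ∉ A)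
    (hi : i ∈ P.part x) : P.part i \ insert x A = (P.part x).erase x := by
  rw [P.part_eq x i hi, sdiff_insert, sdiff_eq_self_of_disjoint]
  refine Finset.disjoint_left.mpr fun j hjx hjA => ?_
  exact hxA (hA j hjA ▸ P.part_eq x j hjx ▸ P.mem_part x)

theorem part_sdiff_insert_of_notMem (hA : ∀ j ∈ A, P.part j = A) (hi : i ∉ insert x A)
    (hix : i ∉ P.part x) : P.part i \ insert x A = P.part i := by
  rw [sdiff_insert_of_notMem (fun h => hix (mem_part_comm.mp h)), sdiff_eq_self_of_disjoint]
  refine Finset.disjoint_left.mpr fun j hji hjA => ?_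
  exact hi (mem_insert_of_mem (hA j hjA ▸ P.part_eq i j hji ▸ P.mem_part i))

end FHGPartition

open FHGPartition

section StarPartition

variable {G : SimpleGraph V} {P : FHGPartition V} {A B : Finset V} {x : V}

def IsStarPartition (G : SimpleGraph V) (P : FHGPartition V) : Prop :=
  ∀ i, ∃ c, IsStarCenter G (P.part i) c

theorem isStarPartition_reblock (hB : ∃ c, IsStarCenter G B c)
    (hrest : ∀ i ∉ B, ∃ c, IsStarCenter G (P.part i \ B) c) :
    IsStarPartition G (P.reblock B) := by
  intro i
  by_cases hi : i ∈ B
  · rw [reblock_part_of_mem hi]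
    exact hB
  · rw [reblock_part_of_notMem hi]
    exact hrest i hi

theorem IsStarPartition.reblock_insert (hP : IsStarPartition G P) (hA : ∀ j ∈ A, P.part j = A)
    (hxA : x ∉ A) (hB : ∃ c, IsStarCenter G (insert x A) c)
    (hx : ((P.part x).erase x).Nonempty → ∃ c, IsStarCenter G ((P.part x).erase x) c) :
    IsStarPartition G (P.reblock (insert x A)) := by
  refine isStarPartition_reblock hB fun i hi => ?_
  by_cases hix : i ∈ P.part x
  · rw [part_sdiff_insert_of_mem hA hxA hix]
    exact hx ⟨i, mem_erase.mpr ⟨fun h => hi (h ▸ mem_insert_self x A), hix⟩⟩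
  · rw [part_sdiff_insert_of_notMem hA hi hix]
    exact hP i

theorem IsStarPartition.card_part_ne_two (hP : IsStarPartition G P)
    (hx : util G x (P.part x) < 1 / 2) : #(P.part x) ≠ 2 := by
  intro h2
  obtain ⟨c, hc⟩ := hP x
  have := hc.one_div_card_le_util (P.mem_part x) h2.ge
  rw [h2, Nat.cast_two] at this
  exact this.not_gt hx

theorem IsStarPartition.exists_isStarCenter_erase (hP : IsStarPartition G P)
    (hx : util G x (P.part x) < 1 / 2) (hne : ((P.part x).erase x).Nonempty) :
    ∃ c, IsStarCenter G ((P.part x).erase x) c := by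
  obtain ⟨c, hc⟩ := hP x
  refine ⟨c, hc.erase fun hxc => ?_⟩
  have h2 : 2 ≤ #(P.part x) := by
    have := card_erase_add_one (P.mem_part x)
    have := hne.card_pos
    omega
  subst hxc
  exact (hc.half_le_util_self h2).not_gt hx

variable (h3 : G.CliqueFree 3) (hP : IsStarPartition G P)
include h3 hP

theorem IsStarPartition.util_lt_half_or_isStarCenter (v : V) :
    util G v (P.part v) < 1 / 2 ∨ (IsStarCenter G (P.part v) v ∧ 2 ≤ #(P.part v)) := by
  obtain ⟨c, hc⟩ := hP v
  by_cases hvc : v = c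
  · subst hvc
    by_cases h2 : 2 ≤ #(P.part v)
    · exact Or.inr ⟨hc, h2⟩
    · have h1 : #(P.part v) = 1 := by have := card_part_pos P v; omega
      left
      rw [hc.util_self, h1]
      norm_num
  · have h2 : 2 ≤ #(P.part v) := one_lt_card.mpr ⟨v, P.mem_part v, c, hc.1, hvc⟩
    have hcv := hc.2 v (P.mem_part v) hvc
    rcases h2.eq_or_lt with h2 | h2
    · refine Or.inr ⟨⟨P.mem_part v, fun j hj hjv => ?_⟩, h2.le⟩
      obtain rfl : j = c := by
        by_contra hjc
        have : 2 < #(P.part v) :=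
          two_lt_card.mpr ⟨v, P.mem_part v, j, hj, c, hc.1, Ne.symm hjv, hvc, hjc⟩
        omega
      exact hcv.symm
    · left
      rw [hc.util_of_ne h3 (P.mem_part v) hvc]
      exact one_div_lt_one_div_of_lt two_pos (by exact_mod_cast h2)

end StarPartition

section Potential

-- In a triangle-free graph a star with `k ≥ 1` vertices has total utility `2 (k - 1) / k`;
-- `starShare k` is its average, so `potential` is the social welfare of a star partition.
def starShare (k : ℕ) : ℚ := 2 * (k - 1) / k ^ 2

def starGain (k : ℕ) : ℚ := (k + 1) * starShare (k + 1) - k * starShare k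

theorem starGain_zero : starGain 0 = 0 := by
  simp [starGain, starShare]

theorem starGain_of_ne_zero {k : ℕ} (hk : k ≠ 0) : starGain k = 2 / (k * (k + 1)) := by
  have hk' : (k : ℚ) ≠ 0 := by exact_mod_cast hk
  unfold starGain starShare
  push_cast
  field_simp
  ring

theorem starGain_one : starGain 1 = 1 := by
  rw [starGain_of_ne_zero one_ne_zero]
  norm_num

theorem starGain_le_one_third {k : ℕ} (hk : k ≠ 1) : starGain k ≤ 1 / 3 := by
  rcases Nat.eq_zero_or_pos k with rfl | hpos
  · rw [starGain_zero]
    norm_num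
  · have h2 : (2 : ℚ) ≤ k := by exact_mod_cast (show 2 ≤ k by omega)
    rw [starGain_of_ne_zero hpos.ne', div_le_div_iff₀ (by positivity) (by norm_num)]
    nlinarith

theorem ne_zero_and_le_of_starGain_le {k m : ℕ} (hk : k ≠ 0) (h : starGain k ≤ starGain m) :
    m ≠ 0 ∧ m ≤ k := by
  have hk' : (0 : ℚ) < k := by exact_mod_cast Nat.pos_of_ne_zero hk
  have hgk : 0 < starGain k := by
    rw [starGain_of_ne_zero hk]
    positivity
  have hm : m ≠ 0 := by
    rintro rfl
    rw [starGain_zero] at h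
    exact h.not_gt hgk
  refine ⟨hm, ?_⟩
  have hm' : (0 : ℚ) < m := by exact_mod_cast Nat.pos_of_ne_zero hm
  rw [starGain_of_ne_zero hk, starGain_of_ne_zero hm,
    div_le_div_iff_of_pos_left two_pos (by positivity) (by positivity)] at h
  by_contra! hmk
  have : (k : ℚ) + 1 ≤ m := by exact_mod_cast hmk
  nlinarith

variable {P : FHGPartition V} {A : Finset V} {x : V}

def potential (P : FHGPartition V) : ℚ := ∑ i, starShare #(P.part i)

theorem potential_reblock_insert (hA : ∀ j ∈ A, P.part j = A) (hxA : x ∉ A) :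
    potential (P.reblock (insert x A)) =
      potential P + starGain #A - starGain #((P.part x).erase x) := by
  set Q := P.reblock (insert x A)
  set m := #((P.part x).erase x)
  set d : V → ℚ := fun i => starShare #(Q.part i) - starShare #(P.part i)
  have hQ : ∀ i ∈ insert x A, #(Q.part i) = #A + 1 := fun i hi => by
    rw [reblock_part_of_mem hi, card_insert_of_notMem hxA]
  have hdisj : Disjoint A (P.part x) := Finset.disjoint_left.mpr fun j hjA hjx =>
    hxA (hA j hjA ▸ P.part_eq x j hjx ▸ P.mem_part x)
  have hout : ∀ i ∉ A ∪ P.part x, d i = 0 := fun i hi => by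
    rw [mem_union, not_or] at hi
    have hi' : i ∉ insert x A := by
      rw [mem_insert, not_or]
      exact ⟨fun h => hi.2 (h ▸ P.mem_part x), hi.1⟩
    simp only [d, Q, reblock_part_of_notMem hi', part_sdiff_insert_of_notMem hA hi' hi.2,
      sub_self]
  have hsumA : ∑ i ∈ A, d i = ∑ _i ∈ A, (starShare (#A + 1) - starShare #A) :=
    sum_congr rfl fun i hi => by simp only [d, hQ i (mem_insert_of_mem hi), hA i hi]
  have hcard : #(P.part x) = m + 1 := (card_erase_add_one (P.mem_part x)).symm
  have hsumx : ∑ i ∈ P.part x, d i =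
      starShare (#A + 1) - starShare (m + 1) + ∑ _i ∈ (P.part x).erase x,
        (starShare m - starShare (m + 1)) := by
    rw [← add_sum_erase _ _ (P.mem_part x)]
    refine congrArg₂ (· + ·) (by simp only [d, hQ x (mem_insert_self x A), hcard]) ?_
    refine sum_congr rfl fun i hi => ?_
    have hi' : i ∉ insert x A := fun h => (mem_insert.mp h).elim (ne_of_mem_erase hi)
      fun hiA => Finset.disjoint_left.mp hdisj hiA (mem_of_mem_erase hi)
    simp only [d, Q, reblock_part_of_notMem hi',
      P.part_eq x i (mem_of_mem_erase hi), part_sdiff_insert_of_mem hA hxA (P.mem_part x), hcard,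
      m]
  have hdiff : potential Q - potential P = ∑ i, d i := by
    simp only [potential, d, sum_sub_distrib]
  rw [← sum_subset (subset_univ _) fun i _ hi => hout i hi, sum_union hdisj, hsumA, hsumx,
    sum_const, sum_const, nsmul_eq_mul, nsmul_eq_mul] at hdiff
  unfold starGain
  linear_combination hdiff

end Potential

section Optimal

variable {G : SimpleGraph V} {P : FHGPartition V} {A : Finset V} {v x y : V}
variable (hP : IsStarPartition G P)
  (hmax : ∀ Q : FHGPartition V, IsStarPartition G Q → potential Q ≤ potential P)
include hP hmax

theorem starGain_le_of_forall_potential_le (hA : ∀ j ∈ A, P.part j = A) (hxA : x ∉ A)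
    (hB : ∃ c, IsStarCenter G (insert x A) c) (hx : util G x (P.part x) < 1 / 2) :
    starGain #A ≤ starGain #((P.part x).erase x) := by
  have := hmax _ (hP.reblock_insert hA hxA hB (hP.exists_isStarCenter_erase hx))
  rw [potential_reblock_insert hA hxA] at this
  linarith

theorem card_part_le_of_adj (hv : IsStarCenter G (P.part v) v) (hvx : G.Adj v x)
    (hxv : x ∉ P.part v) (hx : util G x (P.part x) < 1 / 2) :
    2 ≤ #(P.part x) ∧ #(P.part x) ≤ #(P.part v) + 1 := by
  have hB : IsStarCenter G (insert x (P.part v)) v :=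
    ⟨mem_insert_of_mem hv.1, fun j hj hjv =>
      (mem_insert.mp hj).elim (fun h => h ▸ hvx) fun h => hv.2 j h hjv⟩
  have hgain := starGain_le_of_forall_potential_le hP hmax (fun j hj => P.part_eq v j hj) hxv
    ⟨v, hB⟩ hx
  have := ne_zero_and_le_of_starGain_le (card_part_pos P v).ne' hgain
  have := card_erase_add_one (P.mem_part x)
  omega

theorem one_le_starGain_add_starGain (hx : util G x (P.part x) < 1 / 2)
    (hy : util G y (P.part y) < 1 / 2) (hxy : G.Adj x y) (hyx : y ∉ P.part x) :
    1 ≤ starGain #((P.part x).erase x) + starGain #((P.part y).erase y) := by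
  -- Isolate `x`, then let `y` join it.
  set P' := P.reblock (insert x (∅ : Finset V))
  have hclosed : ∀ j ∈ (∅ : Finset V), P.part j = ∅ := by simp
  have hsingle : IsStarCenter G (insert x (∅ : Finset V)) x := ⟨mem_insert_self x ∅, by simp⟩
  have hP' : IsStarPartition G P' :=
    hP.reblock_insert hclosed (notMem_empty x) ⟨x, hsingle⟩ (hP.exists_isStarCenter_erase hx)
  have hy' : y ∉ insert x (∅ : Finset V) := by simpa using hxy.ne'
  have hP'y : P'.part y = P.part y := by
    rw [reblock_part_of_notMem hy', part_sdiff_insert_of_notMem hclosed hy' hyx]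
  have hclosed' : ∀ j ∈ insert x (∅ : Finset V), P'.part j = insert x ∅ := fun j hj =>
    reblock_part_of_mem hj
  have hpair : IsStarCenter G (insert y (insert x (∅ : Finset V))) x :=
    ⟨mem_insert_of_mem (mem_insert_self x ∅), fun j hj hjx => by
      rcases mem_insert.mp hj with rfl | hj
      · exact hxy
      · simp_all⟩
  have hmove := hmax _ (hP'.reblock_insert hclosed' hy' ⟨x, hpair⟩
    (hP'.exists_isStarCenter_erase (hP'y ▸ hy)))
  rw [potential_reblock_insert hclosed' hy', potential_reblock_insert hclosed (notMem_empty x),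
    hP'y, card_insert_of_notMem (notMem_empty x), card_empty, zero_add, starGain_zero,
    starGain_one] at hmove
  linarith

end Optimal

section Core

variable {G : SimpleGraph V} {P : FHGPartition V} {S : Finset V} {x y : V}
variable (hP : IsStarPartition G P)
  (hmax : ∀ Q : FHGPartition V, IsStarPartition G Q → potential Q ≤ potential P)
  (h3 : G.CliqueFree 3)
include hP hmax h3

theorem not_adj_of_util_lt_half (hx : util G x (P.part x) < 1 / 2)
    (hy : util G y (P.part y) < 1 / 2) : ¬ G.Adj x y := by
  intro hxy
  by_cases hyx : y ∈ P.part x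
  · obtain ⟨c, hc⟩ := hP x
    have h2 : 2 ≤ #(P.part x) := one_lt_card.mpr ⟨x, P.mem_part x, y, hyx, hxy.ne⟩
    have hcx : c ≠ x := by
      rintro rfl
      exact (hc.half_le_util_self h2).not_gt hx
    have hcy : c ≠ y := by
      rintro rfl
      rw [P.part_eq x c hyx] at hy
      exact (hc.half_le_util_self h2).not_gt hy
    exact isIndepSet_neighborSet_of_triangleFree G h3 c (hc.2 x (P.mem_part x) hcx.symm)
      (hc.2 y hyx hcy.symm) hxy.ne hxy
  · have hsum := one_le_starGain_add_starGain hP hmax hx hy hxy hyx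
    have hx3 := starGain_le_one_third (k := #((P.part x).erase x)) fun h => by
      have := card_erase_add_one (P.mem_part x)
      exact hP.card_part_ne_two hx (by omega)
    have hy3 := starGain_le_one_third (k := #((P.part y).erase y)) fun h => by
      have := card_erase_add_one (P.mem_part y)
      exact hP.card_part_ne_two hy (by omega)
    linarith

variable (h4 : ∀ v w, v ≠ w → (G.commonNeighbors v w).Subsingleton)
include h4

theorem exists_isStarCenter_of_blocks (hS : Blocks G P S) :
    ∃ v, IsStarCenter G S v ∧ IsStarCenter G (P.part v) v ∧ 2 ≤ #(P.part v) ∧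
      ∀ x ∈ S, x ≠ v → util G x (P.part x) < 1 / 2 := by
  obtain ⟨hne, hlt⟩ := hS
  have hnbr : ∀ i ∈ S, ∃ j ∈ S, G.Adj i j := fun i hi =>
    exists_adj_of_util_pos (util_nonneg.trans_lt (hlt i hi))
  obtain ⟨i, hi⟩ := hne
  obtain ⟨j, hj, hij⟩ := hnbr i hi
  obtain ⟨v, hv, hcv, h2⟩ : ∃ v ∈ S, IsStarCenter G (P.part v) v ∧ 2 ≤ #(P.part v) := by
    rcases hP.util_lt_half_or_isStarCenter h3 i with hi' | hi'
    · rcases hP.util_lt_half_or_isStarCenter h3 j with hj' | hj'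
      · exact absurd hij (not_adj_of_util_lt_half hP hmax h3 hi' hj')
      · exact ⟨j, hj, hj'⟩
    · exact ⟨i, hi, hi'⟩
  have hlow : ∀ x ∈ S, x ≠ v → util G x (P.part x) < 1 / 2 := fun x hx hxv =>
    (hP.util_lt_half_or_isStarCenter h3 x).resolve_right fun ⟨hcx, h2x⟩ => by
      have := util_add_util_le_one h3 h4 hv hxv.symm
      have := (hcv.half_le_util_self h2).trans_lt (hlt v hv)
      have := (hcx.half_le_util_self h2x).trans_lt (hlt x hx)
      linarith
  refine ⟨v, ⟨hv, fun x hx hxv => ?_⟩, hcv, h2, hlow⟩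
  obtain ⟨y, hy, hxy⟩ := hnbr x hx
  obtain rfl : y = v := by_contra fun hyv =>
    not_adj_of_util_lt_half hP hmax h3 (hlow x hx hxv) (hlow y hy hyv) hxy
  exact hxy.symm

theorem inCore_of_forall_potential_le : InCore G P := by
  intro S hS
  obtain ⟨v, hSv, hv, h2, hlow⟩ := exists_isStarCenter_of_blocks hP hmax h3 h4 hS
  have hS0 : (0 : ℚ) < #S := by exact_mod_cast card_pos.mpr ⟨v, hSv.1⟩
  have hks : #(P.part v) < #S := by
    have := hS.2 v hSv.1
    rw [hv.util_self, hSv.util_self] at this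
    have hk0 : (0 : ℚ) < #(P.part v) := by exact_mod_cast card_part_pos P v
    exact_mod_cast (one_div_lt_one_div hS0 hk0).mp (by linarith)
  obtain ⟨x, hx, hxv⟩ := exists_mem_ne (by omega : 1 < #S) v
  have hsx : 2 ≤ #(P.part x) → #S < #(P.part x) := fun h2x => by
    obtain ⟨c, hc⟩ := hP x
    have := (hc.one_div_card_le_util (P.mem_part x) h2x).trans_lt (hS.2 x hx)
    rw [hSv.util_of_ne h3 hx hxv] at this
    have hx0 : (0 : ℚ) < #(P.part x) := by exact_mod_cast card_part_pos P x
    exact_mod_cast (one_div_lt_one_div hx0 hS0).mp this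
  by_cases hxP : x ∈ P.part v
  · have := hsx (P.part_eq v x hxP ▸ h2)
    rw [P.part_eq v x hxP] at this
    omega
  · obtain ⟨h2x, hle⟩ := card_part_le_of_adj hP hmax hv (hSv.2 x hx hxv) hxP (hlow x hx hxv)
    have := hsx h2x
    omega

end Core

theorem exists_isStarPartition_forall_potential_le (G : SimpleGraph V) :
    ∃ P, IsStarPartition G P ∧
      ∀ Q : FHGPartition V, IsStarPartition G Q → potential Q ≤ potential P := by
  have : Finite (FHGPartition V) :=
    Finite.of_injective FHGPartition.part (by rintro ⟨_, _, _⟩ ⟨_, _, _⟩ rfl; rfl)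
  let singletons : FHGPartition V :=
    ⟨fun i => {i}, mem_singleton_self, fun i j hj => by rw [mem_singleton.mp hj]⟩
  have hsingletons : IsStarPartition G singletons := fun i =>
    ⟨i, mem_singleton_self i, fun j hj hji => absurd (mem_singleton.mp hj) hji⟩
  exact Set.exists_max_image {Q | IsStarPartition G Q} potential (Set.toFinite _) ⟨_, hsingletons⟩

/-- For every simple symmetric fractional hedonic game represented by a finite
simple graph with girth at least five (no 3-cycle and no 4-cycle), the core is
non-empty; moreover there is a core partition each of whose blocks is a singleton
or a star (a block of size at least 2 with a center adjacent to all other members). -/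
theorem stmt_11 (G : SimpleGraph V)
    (hgirth : ∀ (v : V) (c : G.Walk v v), c.IsCycle → c.length ≠ 3 ∧ c.length ≠ 4) :
    ∃ π : FHGPartition V, InCore G π ∧
      ∀ i : V, (π.part i).card = 1 ∨
        (2 ≤ (π.part i).card ∧
          ∃ c ∈ π.part i, ∀ j ∈ π.part i, j ≠ c → G.Adj c j) := by
  have h3 : G.CliqueFree 3 :=
    cliqueFree_three_of_isCycle_length_ne_three fun v c hc => (hgirth v c hc).1
  have h4 : ∀ v w, v ≠ w → (G.commonNeighbors v w).Subsingleton := fun _ _ =>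
    commonNeighbors_subsingleton_of_isCycle_length_ne_four fun v c hc => (hgirth v c hc).2
  obtain ⟨P, hP, hmax⟩ := exists_isStarPartition_forall_potential_le G
  refine ⟨P, inCore_of_forall_potential_le hP hmax h3 h4, fun i => ?_⟩
  obtain ⟨c, hc⟩ := hP i
  exact hc.card_eq_one_or
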